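/- Let ℓ ≥ 5 be a prime and let a, b ∈ ℚ₂ be nonzero elements with a^ℓ + b^ℓ + 1 = 0. Set λ = −a^ℓ and let E_λ be the Weierstrass curve y² = x(x−1)(x−λ) over ℚ₂. Then Δ(E_λ) ≠ 0, j(E_λ) ≠ 0, and v_2(j(E_λ)) < 0. -/

import Mathlib

/-!
Write `c = ab` and `t = λ(λ - 1)`. The Fermat relation gives `t = -c^ℓ`, while
`Δ = 16 t²` and `c₄ = 16 (t + 1)`, so `v₂(j) = 8 + 3 v₂(t + 1) - 2 v₂(t)`; this is negative as soon
as `v₂(t) > 4` or `v₂(t) < -8`. Since the residue field of `ℚ₂` is `𝔽₂`, the two summands of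
`a^ℓ + b^ℓ = -1` cannot both be units, and comparing valuations leaves `v₂(c) ≥ 1` or `v₂(c) ≤ -2`.
With `ℓ ≥ 5` this puts `v₂(t) = ℓ v₂(c)` in the required range.
-/

/-- The Legendre curve `y² = x(x-1)(x-λ)` as a Weierstrass curve. -/
def LegendreCurve {R : Type*} [CommRing R] (lam : R) : WeierstrassCurve R :=
  { a₁ := 0, a₂ := -(lam + 1), a₃ := 0, a₄ := lam, a₆ := 0 }

namespace Padic

variable {p : ℕ} [Fact p.Prime]

theorem valuation_neg (x : ℚ_[p]) : (-x).valuation = x.valuation := by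
  rcases eq_or_ne x 0 with rfl | hx
  · simp
  · have h := addValuation.map_neg x
    rwa [addValuation.apply hx, addValuation.apply (neg_ne_zero.mpr hx), WithTop.coe_inj] at h

theorem valuation_add_eq_left {x y : ℚ_[p]} (hx : x ≠ 0) (h : x.valuation < y.valuation) :
    (x + y).valuation = x.valuation := by
  rcases eq_or_ne y 0 with rfl | hy
  · simp
  have key : addValuation (x + y) = addValuation x :=
    AddValuation.map_add_eq_of_lt_left _ (by simpa [hx, hy] using h)
  have hxy : x + y ≠ 0 := fun h0 => by simp [h0, hx] at key
  simpa [hx, hxy] using key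

theorem norm_eq_one_of_valuation_eq_zero {x : ℚ_[p]} (hx : x ≠ 0) (h : x.valuation = 0) :
    ‖x‖ = 1 := by
  rw [norm_eq_zpow_neg_valuation hx, h, neg_zero, zpow_zero]

end Padic

theorem PadicInt.norm_add_lt_one_of_norm_eq_one {x y : ℤ_[2]} (hx : ‖x‖ = 1) (hy : ‖y‖ = 1) :
    ‖x + y‖ < 1 := by
  have toZMod_eq_one : ∀ z : ℤ_[2], ‖z‖ = 1 → toZMod z = 1 := by
    intro z hz
    have hne : toZMod z ≠ 0 := by
      rw [Ne, ← RingHom.mem_ker, ker_toZMod, IsLocalRing.mem_maximalIdeal, mem_nonunits, hz]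
      exact lt_irrefl 1
    generalize toZMod z = w at hne
    revert w
    decide
  rw [← mem_nonunits, ← IsLocalRing.mem_maximalIdeal, ← ker_toZMod, RingHom.mem_ker, map_add,
    toZMod_eq_one x hx, toZMod_eq_one y hy]
  decide

theorem Padic.two_norm_add_lt_one_of_norm_eq_one {x y : ℚ_[2]} (hx : ‖x‖ = 1) (hy : ‖y‖ = 1) :
    ‖x + y‖ < 1 :=
  PadicInt.norm_add_lt_one_of_norm_eq_one (x := ⟨x, hx.le⟩) (y := ⟨y, hy.le⟩) hx hy

theorem Padic.valuation_mul_of_pow_add_pow_add_one_eq_zero {ℓ : ℕ} (hℓ : 0 < ℓ) {a b : ℚ_[2]}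
    (ha : a ≠ 0) (hb : b ≠ 0) (hab : a ^ ℓ + b ^ ℓ + 1 = 0) :
    1 ≤ (a * b).valuation ∨ (a * b).valuation ≤ -2 := by
  wlog hle : a.valuation ≤ b.valuation generalizing a b
  · rw [mul_comm]
    exact this hb ha (by linear_combination hab) (le_of_not_ge hle)
  have hsum : a ^ ℓ + b ^ ℓ = -1 := by linear_combination hab
  have hvsum : (a ^ ℓ + b ^ ℓ).valuation = 0 := by
    rw [hsum, valuation_neg, valuation_one]
  have hℓ' : (0 : ℤ) < ℓ := by exact_mod_cast hℓ
  rw [valuation_mul ha hb]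
  rcases hle.lt_or_eq with hlt | heq
  · have h := valuation_add_eq_left (pow_ne_zero ℓ ha) (y := b ^ ℓ)
      (by simpa only [valuation_pow] using mul_lt_mul_of_pos_left hlt hℓ')
    rw [hvsum, valuation_pow, eq_comm, mul_eq_zero] at h
    omega
  · have h := le_valuation_add (x := a ^ ℓ) (y := b ^ ℓ) (by rw [hsum]; norm_num)
    rw [hvsum, valuation_pow, valuation_pow, ← heq, min_self] at h
    have hnonpos : a.valuation ≤ 0 := by nlinarith
    have hne : a.valuation ≠ 0 := by
      intro h0
      have hunits : ‖a ^ ℓ‖ = 1 ∧ ‖b ^ ℓ‖ = 1 := by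
        simp only [norm_pow, norm_eq_one_of_valuation_eq_zero ha h0,
          norm_eq_one_of_valuation_eq_zero hb (heq ▸ h0), one_pow, and_self]
      have := two_norm_add_lt_one_of_norm_eq_one hunits.1 hunits.2
      rw [hsum, norm_neg, norm_one] at this
      exact lt_irrefl 1 this
    omega

theorem legendreCurve_Δ {R : Type*} [CommRing R] (lam : R) :
    (LegendreCurve lam).Δ = 16 * (lam * (lam - 1)) ^ 2 := by
  simp only [LegendreCurve, WeierstrassCurve.Δ, WeierstrassCurve.b₂, WeierstrassCurve.b₄,
    WeierstrassCurve.b₆, WeierstrassCurve.b₈]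
  ring

theorem legendreCurve_c₄ {R : Type*} [CommRing R] (lam : R) :
    (LegendreCurve lam).c₄ = 16 * (lam * (lam - 1) + 1) := by
  simp only [LegendreCurve, WeierstrassCurve.c₄, WeierstrassCurve.b₂, WeierstrassCurve.b₄]
  ring

open Padic in
theorem legendreCurve_valuation_j {lam : ℚ_[2]} (ht : lam * (lam - 1) ≠ 0)
    (ht1 : lam * (lam - 1) + 1 ≠ 0) :
    ((LegendreCurve lam).c₄ ^ 3 / (LegendreCurve lam).Δ).valuation =
      8 + 3 * (lam * (lam - 1) + 1).valuation - 2 * (lam * (lam - 1)).valuation := by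
  rw [legendreCurve_Δ, legendreCurve_c₄]
  generalize lam * (lam - 1) = t at ht ht1 ⊢
  have h16 : (16 : ℚ_[2]) ≠ 0 := by norm_num
  have hv16 : (16 : ℚ_[2]).valuation = 4 := by
    rw [show (16 : ℚ_[2]) = (2 : ℕ) ^ 4 by norm_num, valuation_pow, valuation_p]
    rfl
  rw [div_eq_mul_inv, valuation_mul (pow_ne_zero 3 (mul_ne_zero h16 ht1))
      (inv_ne_zero (mul_ne_zero h16 (pow_ne_zero 2 ht))), valuation_inv, valuation_pow,
    valuation_mul h16 ht1, valuation_mul h16 (pow_ne_zero 2 ht), valuation_pow, hv16]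
  push_cast
  ring

open Padic in
theorem legendreCurve_valuation_j_neg {lam : ℚ_[2]} (ht : lam * (lam - 1) ≠ 0)
    (hv : 4 < (lam * (lam - 1)).valuation ∨ (lam * (lam - 1)).valuation < -8) :
    (LegendreCurve lam).Δ ≠ 0 ∧ (LegendreCurve lam).c₄ ^ 3 / (LegendreCurve lam).Δ ≠ 0 ∧
      ((LegendreCurve lam).c₄ ^ 3 / (LegendreCurve lam).Δ).valuation < 0 := by
  have ht1 : lam * (lam - 1) + 1 ≠ 0 := by
    intro h0
    rw [eq_neg_of_add_eq_zero_left h0, valuation_neg, valuation_one] at hv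
    omega
  have hneg : ((LegendreCurve lam).c₄ ^ 3 / (LegendreCurve lam).Δ).valuation < 0 := by
    rw [legendreCurve_valuation_j ht ht1]
    generalize lam * (lam - 1) = t at ht hv ⊢
    rcases hv with hv | hv
    · rw [add_comm t, valuation_add_eq_left one_ne_zero (by rw [valuation_one]; omega),
        valuation_one]
      omega
    · rw [valuation_add_eq_left ht (by rw [valuation_one]; omega)]
      omega
  -- `v 0 = 0` and `x / 0 = 0`, so the negative valuation rules out `j = 0` and `Δ = 0`.
  have hj : (LegendreCurve lam).c₄ ^ 3 / (LegendreCurve lam).Δ ≠ 0 := fun h0 => by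
    simp [h0] at hneg
  exact ⟨fun h0 => hj (by rw [h0, div_zero]), hj, hneg⟩

theorem stmt1_general (ℓ : ℕ) (h5 : 5 ≤ ℓ) (a b : ℚ_[2])
    (ha : a ≠ 0) (hb : b ≠ 0) (hab : a ^ ℓ + b ^ ℓ + 1 = 0) :
    (LegendreCurve (-a ^ ℓ)).Δ ≠ 0 ∧
    (LegendreCurve (-a ^ ℓ)).c₄ ^ 3 / (LegendreCurve (-a ^ ℓ)).Δ ≠ 0 ∧
    ((LegendreCurve (-a ^ ℓ)).c₄ ^ 3 / (LegendreCurve (-a ^ ℓ)).Δ).valuation < 0 := by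
  have ht : -a ^ ℓ * (-a ^ ℓ - 1) = -(a * b) ^ ℓ := by linear_combination a ^ ℓ * hab
  apply legendreCurve_valuation_j_neg
    (by rw [ht]; exact neg_ne_zero.mpr (pow_ne_zero ℓ (mul_ne_zero ha hb)))
  rw [ht, Padic.valuation_neg, Padic.valuation_pow]
  rcases Padic.valuation_mul_of_pow_add_pow_add_one_eq_zero (by omega) ha hb hab with h | h
  · left; nlinarith
  · right; nlinarith

theorem stmt1 (ℓ : ℕ) (hℓ : ℓ.Prime) (h5 : 5 ≤ ℓ) (a b : ℚ_[2])
    (ha : a ≠ 0) (hb : b ≠ 0) (hab : a ^ ℓ + b ^ ℓ + 1 = 0) :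
    (LegendreCurve (-a ^ ℓ)).Δ ≠ 0 ∧
    (LegendreCurve (-a ^ ℓ)).c₄ ^ 3 / (LegendreCurve (-a ^ ℓ)).Δ ≠ 0 ∧
    ((LegendreCurve (-a ^ ℓ)).c₄ ^ 3 / (LegendreCurve (-a ^ ℓ)).Δ).valuation < 0 :=
  stmt1_general ℓ h5 a b ha hb hab
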